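/- Let d_1, d_2, d_3, d_4 be positive real numbers such that the multiset {d_1, d_2} is not equal to the multiset {d_3, d_4} (i.e., it is not the case that (d_1 = d_3 and d_2 = d_4) or (d_1 = d_4 and d_2 = d_3)). Then the set {α ∈ ℝ : d_1^α + d_2^α = d_3^α + d_4^α} is finite and has at most 4 elements. (Consequently, for the α-weighted linkage rule of class 𝒜₁, the comparison between the merge values of two candidate pairs of clusters, which is determined by eight points, changes outcome at most 4 times as α ranges over ℝ.) -/

import Mathlib

/-!
Since `d ^ α = exp (α * log d)`, the set in question is the zero set of the exponential sum
`∑ c a * exp (a * α)` whose frequencies are the (at most four) numbers `log dᵢ`, and whose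
coefficients do not all vanish because the multisets `{d₁, d₂}` and `{d₃, d₄}` differ.
An exponential sum with `n` nonzero terms has fewer than `n` real zeros: multiplying by
`exp (-b * α)` for one of its frequencies `b` keeps the zeros, and the derivative of the product
is an exponential sum with `n - 1` nonzero terms, so Rolle's theorem gives the induction step.
-/

open Real Set

section Rolle

variable {f f' : ℝ → ℝ}

theorem exists_strictMono_deriv_zeros (hf : ∀ x, HasDerivAt f (f' x) x) {n : ℕ}
    {x : Fin (n + 1) → ℝ} (hx : StrictMono x) (hfx : ∀ i, f (x i) = 0) :
    ∃ y : Fin n → ℝ, StrictMono y ∧ ∀ i, f' (y i) = 0 := by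
  have hrolle (i : Fin n) : ∃ y ∈ Ioo (x i.castSucc) (x i.succ), f' y = 0 :=
    exists_hasDerivAt_eq_zero (hx i.castSucc_lt_succ)
      (fun t _ => (hf t).continuousAt.continuousWithinAt) (by rw [hfx, hfx])
      fun t _ => hf t
  choose y hy hf'y using hrolle
  refine ⟨y, fun i j hij => ?_, hf'y⟩
  calc y i < x i.succ := (hy i).2
    _ ≤ x j.castSucc := hx.monotone (Fin.succ_le_castSucc_iff.mpr hij)
    _ < y j := (hy j).1

theorem encard_zeros_le_encard_zeros_deriv_add_one (hf : ∀ x, HasDerivAt f (f' x) x) :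
    {x | f x = 0}.encard ≤ {x | f' x = 0}.encard + 1 := by
  by_contra! hlt
  obtain ⟨k, hk⟩ := ENat.ne_top_iff_exists.mp fun htop : {x | f' x = 0}.encard = ⊤ => by
    simp [htop] at hlt
  obtain ⟨t, hts, htk⟩ := exists_subset_encard_eq (Order.add_one_le_of_lt (hk.symm ▸ hlt))
  have htfin : t.Finite := finite_of_encard_eq_coe htk
  have hcard : htfin.toFinset.card = k + 1 + 1 := by
    exact_mod_cast htfin.encard_eq_coe_toFinset_card ▸ htk
  obtain ⟨y, hy, hf'y⟩ := exists_strictMono_deriv_zeros hf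
    (htfin.toFinset.orderEmbOfFin hcard).strictMono
    fun i => hts (htfin.mem_toFinset.mp (htfin.toFinset.orderEmbOfFin_mem hcard i))
  have : ((k + 1 : ℕ) : ℕ∞) ≤ k := by
    calc ((k + 1 : ℕ) : ℕ∞) = ENat.card (Fin (k + 1)) := by simp
      _ ≤ (range y).encard := hy.injective.encard_range
      _ ≤ {x | f' x = 0}.encard := encard_le_encard (range_subset_iff.mpr hf'y)
      _ = k := hk.symm
  norm_cast at this
  omega

end Rolle

theorem hasDerivAt_sum_mul_exp (s : Finset ℝ) (c : ℝ → ℝ) (x : ℝ) :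
    HasDerivAt (fun x => ∑ a ∈ s, c a * exp (a * x)) (∑ a ∈ s, a * c a * exp (a * x)) x :=
  HasDerivAt.fun_sum fun a _ =>
    (((hasDerivAt_id x).const_mul a).exp.const_mul (c a)).congr_deriv (by simp; ring)

theorem hasDerivAt_exp_mul_sum_mul_exp (s : Finset ℝ) (c : ℝ → ℝ) (b x : ℝ) :
    HasDerivAt (fun x => exp (-b * x) * ∑ a ∈ s, c a * exp (a * x))
      (exp (-b * x) * ∑ a ∈ s, (a - b) * c a * exp (a * x)) x := by
  refine (((hasDerivAt_id x).const_mul (-b)).exp.mul (hasDerivAt_sum_mul_exp s c x)).congr_deriv ?_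
  simp only [id, mul_one, Finset.mul_sum, ← Finset.sum_add_distrib]
  exact Finset.sum_congr rfl fun a _ => by ring

theorem encard_zeros_sum_mul_exp_lt {s : Finset ℝ} {c : ℝ → ℝ} (hc : ∀ a ∈ s, c a ≠ 0)
    (hs : s.Nonempty) : {x | ∑ a ∈ s, c a * exp (a * x) = 0}.encard < s.card := by
  induction s using Finset.strongInduction generalizing c with
  | H s ih =>
  obtain ⟨b, hb⟩ := hs
  rcases (s.erase b).eq_empty_or_nonempty with hsb | hsb
  · obtain rfl : s = {b} := by rw [← Finset.insert_erase hb, hsb]; rfl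
    simp [hc b (Finset.mem_singleton_self b), exp_ne_zero]
  have hc' : ∀ a ∈ s.erase b, (a - b) * c a ≠ 0 := fun a ha =>
    mul_ne_zero (sub_ne_zero.mpr (Finset.ne_of_mem_erase ha)) (hc a (Finset.mem_of_mem_erase ha))
  have hzeros : {x | exp (-b * x) * ∑ a ∈ s, c a * exp (a * x) = 0} =
      {x | ∑ a ∈ s, c a * exp (a * x) = 0} := by
    simp [exp_ne_zero]
  have hzeros' : {x | exp (-b * x) * ∑ a ∈ s, (a - b) * c a * exp (a * x) = 0} =
      {x | ∑ a ∈ s.erase b, (a - b) * c a * exp (a * x) = 0} := by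
    simp [exp_ne_zero, Finset.sum_erase]
  calc {x | ∑ a ∈ s, c a * exp (a * x) = 0}.encard
      ≤ {x | ∑ a ∈ s.erase b, (a - b) * c a * exp (a * x) = 0}.encard + 1 := by
        rw [← hzeros, ← hzeros']
        exact encard_zeros_le_encard_zeros_deriv_add_one (hasDerivAt_exp_mul_sum_mul_exp s c b)
    _ < (s.erase b).card + 1 :=
        (ENat.add_lt_add_iff_right ENat.one_ne_top).mpr (ih _ (Finset.erase_ssubset hb) hc' hsb)
    _ = s.card := by exact_mod_cast Finset.card_erase_add_one hb

theorem Finsupp.encard_zeros_sum_mul_exp_lt {c : ℝ →₀ ℝ} (hc : c ≠ 0) :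
    {x | (c.sum fun a r => r * exp (a * x)) = 0}.encard < c.support.card :=
  _root_.encard_zeros_sum_mul_exp_lt (fun _ => Finsupp.mem_support_iff.mp)
    (Finsupp.support_nonempty_iff.mpr hc)

theorem stmt_7 (d₁ d₂ d₃ d₄ : ℝ) (h1 : 0 < d₁) (h2 : 0 < d₂) (h3 : 0 < d₃) (h4 : 0 < d₄)
    (hne : ¬((d₁ = d₃ ∧ d₂ = d₄) ∨ (d₁ = d₄ ∧ d₂ = d₃))) :
    {α : ℝ | d₁ ^ α + d₂ ^ α = d₃ ^ α + d₄ ^ α}.Finite ∧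
      {α : ℝ | d₁ ^ α + d₂ ^ α = d₃ ^ α + d₄ ^ α}.ncard ≤ 4 := by
  classical
  set c : ℝ →₀ ℝ := Finsupp.single (log d₁) 1 + Finsupp.single (log d₂) 1 -
    (Finsupp.single (log d₃) 1 + Finsupp.single (log d₄) 1) with hc_def
  have hc : c ≠ 0 := by
    have hlog {d d' : ℝ} (hd : 0 < d) (hd' : 0 < d') (h : log d = log d') : d = d' :=
      log_injOn_pos hd hd' h
    rw [hc_def, sub_ne_zero, Ne,
      Finsupp.single_add_single_eq_single_add_single one_ne_zero one_ne_zero]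
    rintro (⟨h13, h24⟩ | ⟨-, h14, h23⟩ | ⟨h, -⟩)
    · exact hne (Or.inl ⟨hlog h1 h3 h13, hlog h2 h4 h24⟩)
    · exact hne (Or.inr ⟨hlog h1 h4 h14, hlog h2 h3 h23⟩)
    · norm_num at h
  have hsupp : c.support ⊆ {log d₁, log d₂, log d₃, log d₄} :=
    Finsupp.support_sub.trans ((Finset.union_subset_union
      Finsupp.support_single_add_single_subset Finsupp.support_single_add_single_subset).trans
        (by simp [Finset.subset_iff]))
  have hsum (x : ℝ) :
      (c.sum fun a r => r * exp (a * x)) = d₁ ^ x + d₂ ^ x - (d₃ ^ x + d₄ ^ x) := by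
    rw [hc_def, Finsupp.sum_sub_index fun _ _ _ => sub_mul _ _ _]
    simp [Finsupp.sum_add_index', add_mul, rpow_def_of_pos, *]
  have hzeros : {α : ℝ | d₁ ^ α + d₂ ^ α = d₃ ^ α + d₄ ^ α} =
      {x | (c.sum fun a r => r * exp (a * x)) = 0} := by
    simp only [hsum, sub_eq_zero]
  rw [← encard_le_coe_iff_finite_ncard_le, hzeros]
  calc _ ≤ (c.support.card : ℕ∞) := (Finsupp.encard_zeros_sum_mul_exp_lt hc).le
    _ ≤ 4 := by exact_mod_cast (Finset.card_le_card hsupp).trans Finset.card_le_four
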